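/- arXiv:1905.00003 — 3 statements merged into one kernel-verified Lean document; each statement's English description precedes it below -/
import Mathlib

section
/- Let n ≥ 7 and let t be an integer with 2 ≤ t ≤ ⌊(n−1)/2⌋ − 1, and set M := n − t − 2. Let F be a finite field of arbitrary characteristic, V a finite-dimensional F-vector space, and A_1,…,A_M, B_1,…,B_{t+1}, C subspaces of V. If at least one of the subspaces A_1,…,A_M, B_1,…,B_{t+1}, C is the zero subspace, then inequality (a) holds. -/
open Finset

variable {F V : Type*} [Field F] [AddCommGroup V] [Module F V]

/-- `eH X` is the dimension of the subspace `X`, as an integer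
(the "entropy" `H(X)` of the paper). -/
noncomputable def eH (X : Submodule F V) : ℤ := Module.finrank F X

/-- Left-hand side of inequality (a):
`H(B_1,…,B_{t+1},A_{t+2},…,A_M) + (t+2)(M−t−1)·H(C)`. -/
noncomputable def lhsA (t M : ℕ) (A B : ℕ → Submodule F V) (C : Submodule F V) : ℤ :=
  eH ((∑ i ∈ Icc 1 (t+1), B i) + ∑ i ∈ Icc (t+2) M, A i)
    + ((t : ℤ) + 2) * ((M : ℤ) - t - 1) * eH C

/-- Right-hand side of inequality (a):
`(M−1)·I(A_1+⋯+A_M ; C) + (t+2)·Σ_{i=t+2}^{M} H(A_i)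
 + ((t+2)(M−t)−1)·( H(C | A_1,…,A_M) + Σ_{i=1}^{M} I(Σ_{j≠i} A_j ; C) )
 + Σ_{i=1}^{t+1} ( H(B_i | A_j : j≠i) + H(B_i | A_i, C)
      + I(A_1+⋯+A_i ; A_{i+1}+⋯+A_{t+1}) + I(A_1+⋯+A_{i−1} ; A_i) )`. -/
noncomputable def rhsA (t M : ℕ) (A B : ℕ → Submodule F V) (C : Submodule F V) : ℤ :=
  ((M : ℤ) - 1) * eH ((∑ i ∈ Icc 1 M, A i) ⊓ C)
  + ((t : ℤ) + 2) * ∑ i ∈ Icc (t+2) M, eH (A i)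
  + (((t : ℤ) + 2) * ((M : ℤ) - t) - 1) *
      ((eH (C + ∑ i ∈ Icc 1 M, A i) - eH (∑ i ∈ Icc 1 M, A i))
        + ∑ i ∈ Icc 1 M, eH ((∑ j ∈ (Icc 1 M).erase i, A j) ⊓ C))
  + ∑ i ∈ Icc 1 (t+1),
      ((eH (B i + ∑ j ∈ (Icc 1 M).erase i, A j) - eH (∑ j ∈ (Icc 1 M).erase i, A j))
        + (eH (B i + (A i + C)) - eH (A i + C))
        + eH ((∑ j ∈ Icc 1 i, A j) ⊓ (∑ j ∈ Icc (i+1) (t+1), A j))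
        + eH ((∑ j ∈ Icc 1 (i-1), A j) ⊓ A i))

/-- Inequality (a) of the paper. -/
def IneqA (t M : ℕ) (A B : ℕ → Submodule F V) (C : Submodule F V) : Prop :=
  lhsA t M A B C ≤ rhsA t M A B C

section helpers

lemma eH_nonneg (X : Submodule F V) : 0 ≤ eH X := Int.ofNat_nonneg _

lemma eH_bot : eH (⊥ : Submodule F V) = 0 := by simp [eH]

variable [FiniteDimensional F V]

lemma eH_mono {X Y : Submodule F V} (h : X ≤ Y) : eH X ≤ eH Y :=
  Int.ofNat_le.mpr (Submodule.finrank_mono h)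

lemma eH_modular (X Y : Submodule F V) : eH (X ⊔ Y) + eH (X ⊓ Y) = eH X + eH Y := by
  have := Submodule.finrank_sup_add_finrank_inf_eq X Y
  unfold eH; exact_mod_cast this

lemma eH_sup_le (X Y : Submodule F V) : eH (X ⊔ Y) ≤ eH X + eH Y := by
  have h := eH_modular X Y
  have := eH_nonneg (X ⊓ Y)
  linarith

lemma eH_sum_le (s : Finset ℕ) (f : ℕ → Submodule F V) :
    eH (∑ i ∈ s, f i) ≤ ∑ i ∈ s, eH (f i) := by
  induction s using Finset.cons_induction with
  | empty => simp [eH_bot]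
  | cons a s ha ih =>
    rw [Finset.sum_cons, Finset.sum_cons, Submodule.add_eq_sup]
    exact le_trans (eH_sup_le _ _) (by linarith)

lemma eH_inf_split (X Y Z : Submodule F V) :
    eH (X ⊓ (Y ⊔ Z)) ≤ eH (X ⊓ Y) + eH ((X ⊔ Y) ⊓ Z) := by
  have m1 := eH_modular X (Y ⊔ Z)
  have m2 := eH_modular X Y
  have m3 := eH_modular (X ⊔ Y) Z
  have m4 : X ⊔ (Y ⊔ Z) = (X ⊔ Y) ⊔ Z := (sup_assoc X Y Z).symm
  rw [m4] at m1
  have m5 := eH_sup_le Y Z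
  linarith

lemma eH_inf_le_of_le {Y Y' : Submodule F V} (h : Y ≤ Y') (C : Submodule F V) :
    eH (Y' ⊓ C) ≤ eH (Y ⊓ C) + eH Y' - eH Y := by
  have m := eH_modular (Y' ⊓ C) Y
  have h1 : (Y' ⊓ C) ⊔ Y ≤ Y' := sup_le inf_le_left h
  have h2 : (Y' ⊓ C) ⊓ Y ≤ Y ⊓ C := by
    simp only [le_inf_iff]
    exact ⟨inf_le_right, le_trans inf_le_left inf_le_right⟩
  have := eH_mono h1
  have := eH_mono h2
  linarith

lemma eH_cond_mono {X Y : Submodule F V} (h : X ≤ Y) (Z : Submodule F V) :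
    eH (Z ⊔ Y) - eH Y ≤ eH (Z ⊔ X) - eH X := by
  have m := eH_modular (Z ⊔ X) Y
  have h1 : (Z ⊔ X) ⊔ Y = Z ⊔ Y := by rw [sup_assoc, sup_eq_right.mpr h]
  have h2 : X ≤ (Z ⊔ X) ⊓ Y := le_inf le_sup_right h
  have := eH_mono h2
  rw [h1] at m
  linarith

lemma eH_inf_le_cond_add (B X S : Submodule F V) :
    eH (B ⊓ S) ≤ (eH (B ⊔ X) - eH X) + eH (X ⊓ S) := by
  have m1 := eH_modular (B ⊓ S) (B ⊓ X)
  have m2 := eH_modular B X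
  have h1 : (B ⊓ S) ⊔ (B ⊓ X) ≤ B := sup_le inf_le_left inf_le_left
  have h2 : (B ⊓ S) ⊓ (B ⊓ X) ≤ X ⊓ S := by
    simp only [le_inf_iff]
    exact ⟨le_trans inf_le_right inf_le_right, le_trans inf_le_left inf_le_right⟩
  have := eH_mono h1
  have := eH_mono h2
  linarith

omit [FiniteDimensional F V] in
lemma sum_decomp (s s1 s2 : Finset ℕ) (hd : Disjoint s1 s2) (he : s = s1 ∪ s2)
    (f : ℕ → Submodule F V) : ∑ j ∈ s, f j = ∑ j ∈ s1, f j + ∑ j ∈ s2, f j := by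
  rw [he, Finset.sum_union hd]

/-- The key per-`Bᵢ` bound. -/
lemma perB (t M : ℕ) (htM : t+1 ≤ M) (A : ℕ → Submodule F V) (C Bi : Submodule F V)
    (i : ℕ) (hi1 : 1 ≤ i) (hi2 : i ≤ t+1) :
    eH Bi ≤ ((eH (Bi + ∑ j ∈ (Icc 1 M).erase i, A j) - eH (∑ j ∈ (Icc 1 M).erase i, A j))
      + (eH (Bi + (A i + C)) - eH (A i + C))
      + eH ((∑ j ∈ Icc 1 i, A j) ⊓ (∑ j ∈ Icc (i+1) (t+1), A j))
      + eH ((∑ j ∈ Icc 1 (i-1), A j) ⊓ A i))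
      + (eH ((∑ j ∈ Icc 1 (t+1), A j) ⊓ (∑ j ∈ Icc (t+2) M, A j))
      + eH ((∑ j ∈ Icc 1 M, A j) ⊓ C)) := by
  simp only [Submodule.add_eq_sup]
  set S := ∑ j ∈ (Icc 1 M).erase i, A j with hSdef
  set P := ∑ j ∈ Icc 1 (i-1), A j with hPdef
  set Pi := ∑ j ∈ Icc 1 i, A j with hPidef
  set Q := ∑ j ∈ Icc (i+1) (t+1), A j with hQdef
  set T := ∑ j ∈ Icc (t+2) M, A j with hTdef
  set W := ∑ j ∈ Icc 1 (t+1), A j with hWdef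
  set R := ∑ j ∈ Icc (i+1) M, A j with hRdef
  set Aall := ∑ j ∈ Icc 1 M, A j with hAalldef
  have hS : S = P ⊔ R := by
    rw [hSdef, hPdef, hRdef, ← Submodule.add_eq_sup]
    apply sum_decomp
    · simp only [Finset.disjoint_left, Finset.mem_Icc]; omega
    · ext j; simp only [Finset.mem_erase, Finset.mem_Icc, Finset.mem_union]; omega
  have hPi : Pi = P ⊔ A i := by
    have hins : Icc 1 i = insert i (Icc 1 (i-1)) := by
      ext j; simp only [Finset.mem_Icc, Finset.mem_insert]; omega
    have hnm : i ∉ Icc 1 (i-1) := by simp only [Finset.mem_Icc]; omega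
    rw [hPidef, hins, Finset.sum_insert hnm, Submodule.add_eq_sup, sup_comm]
  have hR : R = Q ⊔ T := by
    rw [hRdef, hQdef, hTdef, ← Submodule.add_eq_sup]
    apply sum_decomp
    · simp only [Finset.disjoint_left, Finset.mem_Icc]; omega
    · ext j; simp only [Finset.mem_Icc, Finset.mem_union]; omega
  have hWQ : Pi ⊔ Q = W := by
    rw [hPidef, hQdef, hWdef, ← Submodule.add_eq_sup]
    exact (sum_decomp _ _ _
      (by simp only [Finset.disjoint_left, Finset.mem_Icc]; omega)
      (by ext j; simp only [Finset.mem_Icc, Finset.mem_union]; omega) A).symm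
  have hAS : A i ⊔ S = Aall := by
    rw [hSdef, hAalldef, ← Submodule.add_eq_sup]
    exact Finset.add_sum_erase _ A (by simp only [Finset.mem_Icc]; omega)
  have c1 := eH_modular Bi S
  have c2 := eH_inf_le_cond_add Bi (A i ⊔ C) S
  have c3 : eH ((A i ⊔ C) ⊓ S) ≤ eH (A i ⊓ S) + eH (Aall ⊓ C) := by
    have := eH_inf_split S (A i) C
    rw [inf_comm S (A i), sup_comm S (A i), hAS] at this
    rw [inf_comm ((A i) ⊔ C) S]
    exact this
  have c4 : eH (A i ⊓ S) ≤ eH (P ⊓ A i) + eH (Pi ⊓ R) := by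
    have := eH_inf_split (A i) P R
    rw [← hS, sup_comm (A i) P, ← hPi, inf_comm (A i) P] at this
    exact this
  have c5 : eH (Pi ⊓ R) ≤ eH (Pi ⊓ Q) + eH (W ⊓ T) := by
    have := eH_inf_split Pi Q T
    rw [← hR, hWQ] at this
    exact this
  linarith

/-- telescoping Han-type bound. -/
lemma telescopeA (t M : ℕ) (htM : t+1 ≤ M) (A : ℕ → Submodule F V) :
    ∑ j ∈ Icc (t+2) M, (eH (∑ l ∈ Icc 1 M, A l) - eH (∑ l ∈ (Icc 1 M).erase j, A l))
      ≤ eH (∑ l ∈ Icc 1 M, A l) - eH (∑ l ∈ Icc 1 (t+1), A l) := by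
  set f : ℕ → ℤ := fun j => eH (∑ l ∈ Icc 1 j, A l) with hf
  have step : ∀ j ∈ Icc (t+2) M,
      eH (∑ l ∈ Icc 1 M, A l) - eH (∑ l ∈ (Icc 1 M).erase j, A l) ≤ f j - f (j-1) := by
    intro j hj
    simp only [Finset.mem_Icc] at hj
    have hsub : Icc 1 (j-1) ⊆ (Icc 1 M).erase j := by
      intro l hl; simp only [Finset.mem_Icc] at hl
      simp only [Finset.mem_erase, Finset.mem_Icc]; omega
    have hle : (∑ l ∈ Icc 1 (j-1), A l) ≤ ∑ l ∈ (Icc 1 M).erase j, A l :=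
      Finset.sum_le_sum_of_subset hsub
    have hcond := eH_cond_mono hle (A j)
    have h1 : A j ⊔ (∑ l ∈ (Icc 1 M).erase j, A l) = ∑ l ∈ Icc 1 M, A l := by
      rw [← Submodule.add_eq_sup]
      exact Finset.add_sum_erase _ A (by simp only [Finset.mem_Icc]; omega)
    have h2 : A j ⊔ (∑ l ∈ Icc 1 (j-1), A l) = ∑ l ∈ Icc 1 j, A l := by
      have hins : Icc 1 j = insert j (Icc 1 (j-1)) := by
        ext l; simp only [Finset.mem_Icc, Finset.mem_insert]; omega
      rw [← Submodule.add_eq_sup, hins,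
        Finset.sum_insert (by simp only [Finset.mem_Icc]; omega)]
    rw [h1, h2] at hcond
    exact hcond
  refine le_trans (Finset.sum_le_sum step) (le_of_eq ?_)
  have hIcc : Icc (t+2) M = Ico (t+2) (M+1) := by
    ext j; simp only [Finset.mem_Icc, Finset.mem_Ico]; omega
  rw [hIcc, Finset.sum_Ico_eq_sum_range]
  have heq : ∀ i, f (t+2+i) - f (t+2+i-1)
      = (fun i => f (t+1+i)) (i+1) - (fun i => f (t+1+i)) i := by
    intro i; congr 2 <;> omega
  rw [Finset.sum_congr rfl (fun i _ => heq i), Finset.sum_range_sub (fun i => f (t+1+i))]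
  congr 2 <;> omega

end helpers

set_option maxHeartbeats 1600000
/-- If one of the subspaces `A_1,…,A_M, B_1,…,B_{t+1}, C` is the zero subspace,
then inequality (a) holds over any finite field, regardless of the
characteristic. -/
theorem ineqA_of_zero_subspace (n t M : ℕ) (hn : 7 ≤ n) (ht2 : 2 ≤ t)
    (ht : t ≤ (n - 1) / 2 - 1) (hM : M = n - t - 2)
    (F V : Type*) [Field F] [Fintype F] [AddCommGroup V] [Module F V]
    [FiniteDimensional F V]
    (A B : ℕ → Submodule F V) (C : Submodule F V)
    (hzero : (∃ i ∈ Icc 1 M, A i = ⊥) ∨ (∃ i ∈ Icc 1 (t+1), B i = ⊥) ∨ C = ⊥) :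
    IneqA t M A B C := by
  have hM1 : t + 1 ≤ M := by omega
  have hM1' : (t : ℤ) + 1 ≤ (M : ℤ) := by exact_mod_cast hM1
  have ht0 : (0 : ℤ) ≤ (t : ℤ) := Int.ofNat_nonneg t
  unfold IneqA lhsA rhsA
  set Aall := ∑ i ∈ Icc 1 M, A i with hAalldef
  set T := ∑ i ∈ Icc (t+2) M, A i with hTdef
  set W := ∑ i ∈ Icc 1 (t+1), A i with hWdef
  -- common facts
  have hWT : W + T = Aall := by
    rw [hWdef, hTdef, hAalldef]
    exact (sum_decomp _ _ _
      (by simp only [Finset.disjoint_left, Finset.mem_Icc]; omega)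
      (by ext j; simp only [Finset.mem_Icc, Finset.mem_union]; omega) A).symm
  have hmodWT : eH W + eH T = eH Aall + eH (W ⊓ T) := by
    have := eH_modular W T
    rw [← Submodule.add_eq_sup, hWT] at this
    linarith
  have hWle : eH W ≤ eH Aall := by
    apply eH_mono
    rw [← hWT, Submodule.add_eq_sup]; exact le_sup_left
  have hTA : eH T ≤ ∑ i ∈ Icc (t+2) M, eH (A i) := eH_sum_le _ _
  have hIWT0 : (0:ℤ) ≤ eH (W ⊓ T) := eH_nonneg _
  have hx0 : (0:ℤ) ≤ eH (Aall ⊓ C) := eH_nonneg _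
  have hh0 : (0:ℤ) ≤ eH (C + Aall) - eH Aall := by
    have : eH Aall ≤ eH (C + Aall) := by
      apply eH_mono; rw [Submodule.add_eq_sup]; exact le_sup_right
    linarith
  have hCsp : eH (C + Aall) + eH (Aall ⊓ C) = eH C + eH Aall := by
    have := eH_modular C Aall
    rw [← Submodule.add_eq_sup, inf_comm C Aall] at this
    linarith
  have hSC0 : (0:ℤ) ≤ ∑ i ∈ Icc 1 M, eH ((∑ j ∈ (Icc 1 M).erase i, A j) ⊓ C) :=
    Finset.sum_nonneg (fun i _ => eH_nonneg _)
  have hBT : eH ((∑ i ∈ Icc 1 (t+1), B i) + T)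
      ≤ (∑ i ∈ Icc 1 (t+1), eH (B i)) + eH T := by
    rw [Submodule.add_eq_sup]
    have h1 := eH_sup_le (∑ i ∈ Icc 1 (t+1), B i) T
    have h2 := eH_sum_le (Icc 1 (t+1)) B
    linarith
  have hG0 : ∀ i ∈ Icc 1 (t+1), (0:ℤ) ≤
      (eH (B i + ∑ j ∈ (Icc 1 M).erase i, A j) - eH (∑ j ∈ (Icc 1 M).erase i, A j))
        + (eH (B i + (A i + C)) - eH (A i + C))
        + eH ((∑ j ∈ Icc 1 i, A j) ⊓ (∑ j ∈ Icc (i+1) (t+1), A j))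
        + eH ((∑ j ∈ Icc 1 (i-1), A j) ⊓ A i) := by
    intro i _
    have g1 : eH (∑ j ∈ (Icc 1 M).erase i, A j)
        ≤ eH (B i + ∑ j ∈ (Icc 1 M).erase i, A j) := by
      apply eH_mono; rw [Submodule.add_eq_sup]; exact le_sup_right
    have g2 : eH (A i + C) ≤ eH (B i + (A i + C)) := by
      apply eH_mono; rw [Submodule.add_eq_sup]; exact le_sup_right
    have g3 := eH_nonneg ((∑ j ∈ Icc 1 i, A j) ⊓ (∑ j ∈ Icc (i+1) (t+1), A j))
    have g4 := eH_nonneg ((∑ j ∈ Icc 1 (i-1), A j) ⊓ A i)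
    linarith
  have hperB : ∀ i ∈ Icc 1 (t+1), eH (B i) ≤
      ((eH (B i + ∑ j ∈ (Icc 1 M).erase i, A j) - eH (∑ j ∈ (Icc 1 M).erase i, A j))
        + (eH (B i + (A i + C)) - eH (A i + C))
        + eH ((∑ j ∈ Icc 1 i, A j) ⊓ (∑ j ∈ Icc (i+1) (t+1), A j))
        + eH ((∑ j ∈ Icc 1 (i-1), A j) ⊓ A i))
      + (eH (W ⊓ T) + eH (Aall ⊓ C)) := by
    intro i hi
    simp only [Finset.mem_Icc] at hi
    have := perB t M hM1 A C (B i) i hi.1 hi.2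
    rw [hAalldef, hTdef, hWdef]
    linarith [this]
  -- coefficient positivity
  have hc0 : (0:ℤ) ≤ ((t:ℤ)+2)*((M:ℤ)-t-1) := by
    apply mul_nonneg <;> linarith
  have hK0 : (0:ℤ) ≤ ((t:ℤ)+2)*((M:ℤ)-t)-1 := by nlinarith
  obtain ⟨k, hk, hAk⟩ | ⟨k, hk, hBk⟩ | hC := hzero
  · -- Case 3 : some A k = ⊥
    have hBsum : (∑ i ∈ Icc 1 (t+1), eH (B i)) ≤
        (∑ i ∈ Icc 1 (t+1),
          ((eH (B i + ∑ j ∈ (Icc 1 M).erase i, A j) - eH (∑ j ∈ (Icc 1 M).erase i, A j))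
            + (eH (B i + (A i + C)) - eH (A i + C))
            + eH ((∑ j ∈ Icc 1 i, A j) ⊓ (∑ j ∈ Icc (i+1) (t+1), A j))
            + eH ((∑ j ∈ Icc 1 (i-1), A j) ⊓ A i)))
        + ((t:ℤ)+1) * (eH (W ⊓ T) + eH (Aall ⊓ C)) := by
      have h := Finset.sum_le_sum hperB
      rw [Finset.sum_add_distrib, Finset.sum_const, Nat.card_Icc] at h
      have : ((t+1+1-1 : ℕ) : ℤ) = (t:ℤ)+1 := by push_cast; omega
      rw [nsmul_eq_mul, this] at h
      exact h
    have hSkA : (∑ j ∈ (Icc 1 M).erase k, A j) = Aall := by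
      rw [hAalldef, ← Finset.sum_erase_add _ A hk, hAk, Submodule.add_eq_sup, sup_bot_eq]
    have hxle : eH (Aall ⊓ C) ≤ ∑ i ∈ Icc 1 M, eH ((∑ j ∈ (Icc 1 M).erase i, A j) ⊓ C) := by
      have h := Finset.single_le_sum
        (f := fun i => eH ((∑ j ∈ (Icc 1 M).erase i, A j) ⊓ C))
        (fun i _ => eH_nonneg _) hk
      rw [← hSkA]
      exact h
    have fKx : (((t:ℤ)+2)*((M:ℤ)-t)-1) * eH (Aall ⊓ C)
        ≤ (((t:ℤ)+2)*((M:ℤ)-t)-1) *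
          ∑ i ∈ Icc 1 M, eH ((∑ j ∈ (Icc 1 M).erase i, A j) ⊓ C) :=
      mul_le_mul_of_nonneg_left hxle hK0
    have fCsp : ((t:ℤ)+2)*((M:ℤ)-t-1) * eH C
        = ((t:ℤ)+2)*((M:ℤ)-t-1) * (eH (C + Aall) - eH Aall)
          + ((t:ℤ)+2)*((M:ℤ)-t-1) * eH (Aall ⊓ C) := by
      linear_combination (-((t:ℤ)+2)*((M:ℤ)-t-1)) * hCsp
    have f3 : eH T + ((t:ℤ)+1) * eH (W ⊓ T) + ((t:ℤ)+1) * (eH Aall - eH W)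
        = ((t:ℤ)+2) * eH T := by
      linear_combination (-(t:ℤ)-1) * hmodWT
    have f4 : ((t:ℤ)+2) * eH T ≤ ((t:ℤ)+2) * ∑ i ∈ Icc (t+2) M, eH (A i) :=
      mul_le_mul_of_nonneg_left hTA (by linarith)
    have f5 : (0:ℤ) ≤ ((t:ℤ)+1) * (eH Aall - eH W) :=
      mul_nonneg (by linarith) (by linarith)
    have f9 : (0:ℤ) ≤ ((t:ℤ)+1) * (eH (C + Aall) - eH Aall) :=
      mul_nonneg (by linarith) hh0
    have f10 : (0:ℤ) ≤ ((M:ℤ)-1) * eH (Aall ⊓ C) :=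
      mul_nonneg (by linarith) hx0
    linarith [hBT, hBsum, fCsp, f3, f4, f5, fKx, f9, f10]
  · -- Case 2 : some B k = ⊥
    have hksub : k ∈ Icc 1 (t+1) := hk
    have hBzero : eH (B k) = 0 := by rw [hBk, eH_bot]
    have hBsum : (∑ i ∈ Icc 1 (t+1), eH (B i)) ≤
        (∑ i ∈ Icc 1 (t+1),
          ((eH (B i + ∑ j ∈ (Icc 1 M).erase i, A j) - eH (∑ j ∈ (Icc 1 M).erase i, A j))
            + (eH (B i + (A i + C)) - eH (A i + C))
            + eH ((∑ j ∈ Icc 1 i, A j) ⊓ (∑ j ∈ Icc (i+1) (t+1), A j))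
            + eH ((∑ j ∈ Icc 1 (i-1), A j) ⊓ A i)))
        + (t:ℤ) * (eH (W ⊓ T) + eH (Aall ⊓ C)) := by
      have h1 : (∑ i ∈ Icc 1 (t+1), eH (B i))
          = ∑ i ∈ (Icc 1 (t+1)).erase k, eH (B i) := by
        rw [← Finset.sum_erase_add _ _ hk, hBzero, add_zero]
      have h2 := Finset.sum_le_sum (s := (Icc 1 (t+1)).erase k)
        (fun i hi => hperB i (Finset.mem_of_mem_erase hi))
      rw [Finset.sum_add_distrib, Finset.sum_const, Finset.card_erase_of_mem hk,
        Nat.card_Icc] at h2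
      have hcast : ((t+1+1-1-1 : ℕ) : ℤ) = (t:ℤ) := by push_cast; omega
      rw [nsmul_eq_mul, hcast] at h2
      have h3 : (∑ i ∈ (Icc 1 (t+1)).erase k,
          ((eH (B i + ∑ j ∈ (Icc 1 M).erase i, A j) - eH (∑ j ∈ (Icc 1 M).erase i, A j))
            + (eH (B i + (A i + C)) - eH (A i + C))
            + eH ((∑ j ∈ Icc 1 i, A j) ⊓ (∑ j ∈ Icc (i+1) (t+1), A j))
            + eH ((∑ j ∈ Icc 1 (i-1), A j) ⊓ A i)))
          ≤ ∑ i ∈ Icc 1 (t+1),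
          ((eH (B i + ∑ j ∈ (Icc 1 M).erase i, A j) - eH (∑ j ∈ (Icc 1 M).erase i, A j))
            + (eH (B i + (A i + C)) - eH (A i + C))
            + eH ((∑ j ∈ Icc 1 i, A j) ⊓ (∑ j ∈ Icc (i+1) (t+1), A j))
            + eH ((∑ j ∈ Icc 1 (i-1), A j) ⊓ A i)) :=
        Finset.sum_le_sum_of_subset_of_nonneg (Finset.erase_subset _ _)
          (fun i hi _ => hG0 i hi)
      rw [h1]
      linarith
    -- conversion
    have hconv : ((M:ℤ)-t-1) * eH (Aall ⊓ C)
        ≤ (∑ j ∈ Icc (t+2) M, eH ((∑ l ∈ (Icc 1 M).erase j, A l) ⊓ C))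
          + (eH Aall - eH W) := by
      have step : ∀ j ∈ Icc (t+2) M, eH (Aall ⊓ C)
          ≤ eH ((∑ l ∈ (Icc 1 M).erase j, A l) ⊓ C)
            + (eH Aall - eH (∑ l ∈ (Icc 1 M).erase j, A l)) := by
        intro j _
        have hle : (∑ l ∈ (Icc 1 M).erase j, A l) ≤ Aall := by
          rw [hAalldef]
          exact Finset.sum_le_sum_of_subset (Finset.erase_subset _ _)
        have := eH_inf_le_of_le hle C
        linarith
      have h := Finset.sum_le_sum step
      rw [Finset.sum_const, Finset.sum_add_distrib, Nat.card_Icc] at h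
      have hcast : ((M+1-(t+2) : ℕ) : ℤ) = (M:ℤ)-t-1 := by push_cast [hM1]; omega
      rw [nsmul_eq_mul, hcast] at h
      have htel := telescopeA t M hM1 A
      rw [← hAalldef, ← hWdef] at htel
      linarith
    have hconv' : ((t:ℤ)+1) * (((M:ℤ)-t-1) * eH (Aall ⊓ C))
        ≤ ((t:ℤ)+1) * ((∑ j ∈ Icc (t+2) M, eH ((∑ l ∈ (Icc 1 M).erase j, A l) ⊓ C))
          + (eH Aall - eH W)) :=
      mul_le_mul_of_nonneg_left hconv (by linarith)
    have hsub : (∑ j ∈ Icc (t+2) M, eH ((∑ l ∈ (Icc 1 M).erase j, A l) ⊓ C))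
        ≤ ∑ j ∈ Icc 1 M, eH ((∑ l ∈ (Icc 1 M).erase j, A l) ⊓ C) :=
      Finset.sum_le_sum_of_subset_of_nonneg
        (Finset.Icc_subset_Icc (by omega) le_rfl) (fun i _ _ => eH_nonneg _)
    have hsub' : ((t:ℤ)+1) * (∑ j ∈ Icc (t+2) M, eH ((∑ l ∈ (Icc 1 M).erase j, A l) ⊓ C))
        ≤ ((t:ℤ)+1) * ∑ j ∈ Icc 1 M, eH ((∑ l ∈ (Icc 1 M).erase j, A l) ⊓ C) :=
      mul_le_mul_of_nonneg_left hsub (by linarith)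
    have hcSC : (0:ℤ) ≤ (((t:ℤ)+2)*((M:ℤ)-t-1)) *
        ∑ j ∈ Icc 1 M, eH ((∑ l ∈ (Icc 1 M).erase j, A l) ⊓ C) :=
      mul_nonneg hc0 hSC0
    have fCsp : ((t:ℤ)+2)*((M:ℤ)-t-1) * eH C
        = ((t:ℤ)+2)*((M:ℤ)-t-1) * (eH (C + Aall) - eH Aall)
          + ((t:ℤ)+2)*((M:ℤ)-t-1) * eH (Aall ⊓ C) := by
      linear_combination (-((t:ℤ)+2)*((M:ℤ)-t-1)) * hCsp
    have f3 : eH T + ((t:ℤ)+1) * eH (W ⊓ T) + ((t:ℤ)+1) * (eH Aall - eH W)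
        = ((t:ℤ)+2) * eH T := by
      linear_combination (-(t:ℤ)-1) * hmodWT
    have f4 : ((t:ℤ)+2) * eH T ≤ ((t:ℤ)+2) * ∑ i ∈ Icc (t+2) M, eH (A i) :=
      mul_le_mul_of_nonneg_left hTA (by linarith)
    have f9 : (0:ℤ) ≤ ((t:ℤ)+1) * (eH (C + Aall) - eH Aall) :=
      mul_nonneg (by linarith) hh0
    have f10 : (0:ℤ) ≤ ((M:ℤ)-1) * eH (Aall ⊓ C) :=
      mul_nonneg (by linarith) hx0
    linarith [hBT, hBsum, fCsp, f3, f4, hconv', hsub', hcSC, f9, f10, hIWT0, f10]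
  · -- Case 1 : C = ⊥
    subst hC
    have hBsum : (∑ i ∈ Icc 1 (t+1), eH (B i)) ≤
        (∑ i ∈ Icc 1 (t+1),
          ((eH (B i + ∑ j ∈ (Icc 1 M).erase i, A j) - eH (∑ j ∈ (Icc 1 M).erase i, A j))
            + (eH (B i + (A i + ⊥)) - eH (A i + ⊥))
            + eH ((∑ j ∈ Icc 1 i, A j) ⊓ (∑ j ∈ Icc (i+1) (t+1), A j))
            + eH ((∑ j ∈ Icc 1 (i-1), A j) ⊓ A i)))
        + ((t:ℤ)+1) * (eH (W ⊓ T) + eH (Aall ⊓ ⊥)) := by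
      have h := Finset.sum_le_sum hperB
      rw [Finset.sum_add_distrib, Finset.sum_const, Nat.card_Icc] at h
      have : ((t+1+1-1 : ℕ) : ℤ) = (t:ℤ)+1 := by push_cast; omega
      rw [nsmul_eq_mul, this] at h
      exact h
    have hxbot : eH (Aall ⊓ (⊥ : Submodule F V)) = 0 := by rw [inf_bot_eq, eH_bot]
    have hCb : eH (⊥ : Submodule F V) = 0 := eH_bot
    have hhb : eH ((⊥ : Submodule F V) + Aall) = eH Aall := by
      rw [Submodule.add_eq_sup, bot_sup_eq]
    have hSCb : (∑ i ∈ Icc 1 M, eH ((∑ j ∈ (Icc 1 M).erase i, A j) ⊓ (⊥ : Submodule F V)))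
        = 0 := Finset.sum_eq_zero (fun i _ => by rw [inf_bot_eq, eH_bot])
    have f1 : ((t:ℤ)+2)*((M:ℤ)-t-1) * eH (⊥ : Submodule F V) = 0 := by
      rw [hCb]; ring
    have f2 : ((t:ℤ)+1) * (eH (W ⊓ T) + eH (Aall ⊓ (⊥ : Submodule F V)))
        = ((t:ℤ)+1) * eH (W ⊓ T) := by rw [hxbot]; ring
    have f3 : eH T + ((t:ℤ)+1) * eH (W ⊓ T) + ((t:ℤ)+1) * (eH Aall - eH W)
        = ((t:ℤ)+2) * eH T := by
      linear_combination (-(t:ℤ)-1) * hmodWT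
    have f4 : ((t:ℤ)+2) * eH T ≤ ((t:ℤ)+2) * ∑ i ∈ Icc (t+2) M, eH (A i) :=
      mul_le_mul_of_nonneg_left hTA (by linarith)
    have f5 : (0:ℤ) ≤ ((t:ℤ)+1) * (eH Aall - eH W) :=
      mul_nonneg (by linarith) (by linarith)
    have f6 : (((t:ℤ)+2)*((M:ℤ)-t)-1) *
        ((eH ((⊥ : Submodule F V) + Aall) - eH Aall)
          + ∑ i ∈ Icc 1 M, eH ((∑ j ∈ (Icc 1 M).erase i, A j) ⊓ (⊥ : Submodule F V)))
        = 0 := by rw [hhb, hSCb]; ring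
    have f7 : ((M:ℤ)-1) * eH (Aall ⊓ (⊥ : Submodule F V)) = 0 := by rw [hxbot]; ring
    linarith [hBT, hBsum, f1, f2, f3, f4, f5, f6, f7]
end

section
/- Let V be a finite-dimensional vector space over a finite field F and let A_1,…,A_n, C be arbitrary subspaces of V. Then there exist subspaces A'_k ⊆ A_k (for k = 1,…,n) and C̄ ⊆ C such that: (1) the sum A'_1 + ⋯ + A'_n is direct; (2) C̄ ⊆ A'_1 + ⋯ + A'_n and C̄ ∩ (Σ_{i≠k} A'_i) = 0 for every k; (3) dim A_k − dim A'_k = I(A_1+⋯+A_{k−1} ; A_k) for every k; and (4) dim C − dim C̄ ≤ H(C | A_1,…,A_n) + Σ_{i=1}^{n} I(Σ_{j≠i} A_j ; C). -/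
/-!
Take `A'_k` to be a complement of `(A_1 + ⋯ + A_{k-1}) ∩ A_k` inside `A_k`. This does not change
the partial sums `A_1 + ⋯ + A_k`, and each `A'_k` meets `A'_1 + ⋯ + A'_{k-1}` trivially, which in a
modular lattice makes the family independent; (3) is then the dimension count of the complement.
For `C̄` take a complement, inside `C ∩ ΣA_i`, of `W = Σ_k C ∩ Σ_{j≠k} A_j`. Since `A'_j ≤ A_j`,
`C̄` meets every `Σ_{j≠k} A'_j` trivially, and `dim C - dim C̄ = dim C - dim (C ∩ ΣA_i) + dim W`
gives (4).
-/

open Finset Module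

section ModularLattice

variable {α : Type*} [Lattice α] [BoundedOrder α] [IsModularLattice α] [ComplementedLattice α]

/-- A complement of the overlap `(A 1 ⊔ ⋯ ⊔ A (k - 1)) ⊓ A k` inside `A k`. -/
noncomputable def newPart (A : ℕ → α) (k : ℕ) : α :=
  Classical.choose <| IsModularLattice.exists_disjoint_and_sup_eq
    (inf_le_right : (Icc 1 (k - 1)).sup A ⊓ A k ≤ A k)

variable (A : ℕ → α)

theorem disjoint_newPart (k : ℕ) : Disjoint ((Icc 1 (k - 1)).sup A ⊓ A k) (newPart A k) :=
  (Classical.choose_spec <| IsModularLattice.exists_disjoint_and_sup_eq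
    (inf_le_right : (Icc 1 (k - 1)).sup A ⊓ A k ≤ A k)).1

theorem inf_sup_newPart (k : ℕ) : (Icc 1 (k - 1)).sup A ⊓ A k ⊔ newPart A k = A k :=
  (Classical.choose_spec <| IsModularLattice.exists_disjoint_and_sup_eq
    (inf_le_right : (Icc 1 (k - 1)).sup A ⊓ A k ≤ A k)).2

theorem newPart_le (k : ℕ) : newPart A k ≤ A k :=
  (inf_sup_newPart A k).le.trans' le_sup_right

theorem disjoint_sup_Icc_newPart (m : ℕ) : Disjoint ((Icc 1 m).sup A) (newPart A (m + 1)) :=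
  disjoint_iff_inf_le.2 <| (le_inf (inf_le_inf_left _ (newPart_le A (m + 1))) inf_le_right).trans
    (disjoint_newPart A (m + 1)).le_bot

theorem sup_Icc_newPart (m : ℕ) : (Icc 1 m).sup (newPart A) = (Icc 1 m).sup A := by
  induction m with
  | zero => simp
  | succ m ih =>
    rw [← insert_Icc_right_eq_Icc_add_one (by omega), sup_insert, sup_insert, ih,
      ← inf_sup_newPart A (m + 1), Nat.add_sub_cancel, sup_right_comm,
      sup_eq_right.2 (inf_le_left : _ ⊓ A (m + 1) ≤ _), sup_comm]

theorem supIndep_Icc_newPart (m : ℕ) : (Icc 1 m).SupIndep (newPart A) := by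
  induction m with
  | zero => simp
  | succ m ih =>
    rw [← insert_Icc_right_eq_Icc_add_one (by omega)]
    exact ih.insert <| by
      rw [sup_Icc_newPart]
      exact (disjoint_sup_Icc_newPart A m).symm

end ModularLattice

namespace Submodule

variable {K V : Type*} [DivisionRing K] [AddCommGroup V] [Module K V] [FiniteDimensional K V]

theorem finrank_sup_of_disjoint {p q : Submodule K V} (h : Disjoint p q) :
    finrank K ↥(p ⊔ q) = finrank K p + finrank K q := by
  rw [← finrank_sup_add_finrank_inf_eq, h.eq_bot, finrank_bot, add_zero]

theorem finrank_finset_sup_le {ι : Type*} (s : Finset ι) (f : ι → Submodule K V) :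
    finrank K ↥(s.sup f) ≤ ∑ i ∈ s, finrank K (f i) := by
  induction s using Finset.cons_induction with
  | empty => simp
  | cons i s hi ih =>
    rw [sup_cons, sum_cons]
    exact (finrank_add_le_finrank_add_finrank _ _).trans (by omega)

theorem finrank_sub_finrank_newPart (A : ℕ → Submodule K V) (k : ℕ) :
    (finrank K (A k) : ℤ) - finrank K ↥(newPart A k)
      = finrank K ↥((Icc 1 (k - 1)).sup A ⊓ A k) := by
  rw [sub_eq_iff_eq_add, ← Nat.cast_add, ← finrank_sup_of_disjoint (disjoint_newPart A k),
    inf_sup_newPart]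

theorem exists_le_inf_forall_disjoint_finrank_sub_le {ι : Type*} (C S : Submodule K V)
    (s : Finset ι) (T : ι → Submodule K V) :
    ∃ Cb ≤ C ⊓ S, (∀ i ∈ s, Disjoint Cb (T i)) ∧
      (finrank K C : ℤ) - finrank K Cb
        ≤ (finrank K ↥(C ⊔ S) : ℤ) - finrank K S + ∑ i ∈ s, (finrank K ↥(T i ⊓ C) : ℤ) := by
  set W := s.sup fun i => C ⊓ S ⊓ T i
  obtain ⟨Cb, hWCb, hsup⟩ :=
    IsModularLattice.exists_disjoint_and_sup_eq (Finset.sup_le fun i _ => inf_le_left : W ≤ C ⊓ S)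
  have hCb : Cb ≤ C ⊓ S := hsup ▸ le_sup_right
  refine ⟨Cb, hCb, fun i hi => disjoint_iff_inf_le.2 ?_, ?_⟩
  · exact (le_inf inf_le_left (le_sup_of_le hi (le_inf (inf_le_left.trans hCb) inf_le_right))).trans
      hWCb.symm.le_bot
  · have hW : finrank K W + finrank K Cb = finrank K ↥(C ⊓ S) :=
      hsup ▸ (finrank_sup_of_disjoint hWCb).symm
    have hW_le : finrank K W ≤ ∑ i ∈ s, finrank K ↥(T i ⊓ C) :=
      (finrank_finset_sup_le _ _).trans <| sum_le_sum fun i _ =>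
        finrank_mono (le_inf inf_le_right (inf_le_left.trans inf_le_left))
    have := finrank_sup_add_finrank_inf_eq C S
    rw [← Nat.cast_sum]
    omega

end Submodule

theorem exists_complementary_tuple_general (F V : Type*) [Field F]
    [AddCommGroup V] [Module F V] [FiniteDimensional F V]
    (n : ℕ) (A : ℕ → Submodule F V) (C : Submodule F V) :
    ∃ (A' : ℕ → Submodule F V) (Cb : Submodule F V),
      (∀ k ∈ Icc 1 n, A' k ≤ A k) ∧ Cb ≤ C ∧
      (∀ k ∈ Icc 1 n, A' k ⊓ (∑ i ∈ (Icc 1 n).erase k, A' i) = ⊥) ∧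
      Cb ≤ (∑ i ∈ Icc 1 n, A' i) ∧
      (∀ k ∈ Icc 1 n, Cb ⊓ (∑ i ∈ (Icc 1 n).erase k, A' i) = ⊥) ∧
      (∀ k ∈ Icc 1 n,
        (Module.finrank F (A k) : ℤ) - Module.finrank F (A' k)
          = Module.finrank F (((∑ j ∈ Icc 1 (k - 1), A j) ⊓ A k : Submodule F V))) ∧
      ((Module.finrank F C : ℤ) - Module.finrank F Cb
        ≤ ((Module.finrank F ((C + ∑ i ∈ Icc 1 n, A i : Submodule F V)) : ℤ)
              - Module.finrank F ((∑ i ∈ Icc 1 n, A i : Submodule F V)))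
          + ∑ i ∈ Icc 1 n,
              (Module.finrank F (((∑ j ∈ (Icc 1 n).erase i, A j) ⊓ C : Submodule F V)) : ℤ)) := by
  classical
  -- A finite sum of submodules is definitionally their `Finset.sup`.
  obtain ⟨Cb, hCb, hCb_disj, hCb_finrank⟩ :=
    Submodule.exists_le_inf_forall_disjoint_finrank_sub_le C (∑ i ∈ Icc 1 n, A i) (Icc 1 n)
      fun k => ∑ j ∈ (Icc 1 n).erase k, A j
  refine ⟨newPart A, Cb, fun k _ => newPart_le A k, hCb.trans inf_le_left,
    fun k hk => (supIndep_iff_disjoint_erase.1 (supIndep_Icc_newPart A n) k hk).eq_bot,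
    hCb.trans (inf_le_right.trans (sup_Icc_newPart A n).ge),
    fun k hk => ((hCb_disj k hk).mono_right (sup_mono_fun fun i _ => newPart_le A i)).eq_bot,
    fun k _ => Submodule.finrank_sub_finrank_newPart A k, hCb_finrank⟩

/-- Construction of a tuple satisfying the condition of complementary vector
spaces from arbitrary subspaces `A_1,…,A_n, C` (inequalities (1)–(4) of the
paper): there are subspaces `A'_k ⊆ A_k` and `C̄ ⊆ C` such that the sum of the
`A'_k` is direct, `C̄` lies in it and meets each `Σ_{i≠k} A'_i` trivially,
`dim A_k − dim A'_k = I(A_1+⋯+A_{k−1} ; A_k)`, and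
`dim C − dim C̄ ≤ H(C | A_1,…,A_n) + Σ_{i=1}^{n} I(Σ_{j≠i} A_j ; C)`. -/
theorem exists_complementary_tuple (F V : Type*) [Field F] [Fintype F]
    [AddCommGroup V] [Module F V] [FiniteDimensional F V]
    (n : ℕ) (A : ℕ → Submodule F V) (C : Submodule F V) :
    ∃ (A' : ℕ → Submodule F V) (Cb : Submodule F V),
      (∀ k ∈ Icc 1 n, A' k ≤ A k) ∧ Cb ≤ C ∧
      (∀ k ∈ Icc 1 n, A' k ⊓ (∑ i ∈ (Icc 1 n).erase k, A' i) = ⊥) ∧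
      Cb ≤ (∑ i ∈ Icc 1 n, A' i) ∧
      (∀ k ∈ Icc 1 n, Cb ⊓ (∑ i ∈ (Icc 1 n).erase k, A' i) = ⊥) ∧
      (∀ k ∈ Icc 1 n,
        (Module.finrank F (A k) : ℤ) - Module.finrank F (A' k)
          = Module.finrank F (((∑ j ∈ Icc 1 (k - 1), A j) ⊓ A k : Submodule F V))) ∧
      ((Module.finrank F C : ℤ) - Module.finrank F Cb
        ≤ ((Module.finrank F ((C + ∑ i ∈ Icc 1 n, A i : Submodule F V)) : ℤ)
              - Module.finrank F ((∑ i ∈ Icc 1 n, A i : Submodule F V)))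
          + ∑ i ∈ Icc 1 n,
              (Module.finrank F (((∑ j ∈ (Icc 1 n).erase i, A j) ⊓ C : Submodule F V)) : ℤ)) :=
  exists_complementary_tuple_general F V n A C
end

section
/- Let V be a finite-dimensional vector space over a field F, let A'_1,…,A'_n be subspaces whose sum A'_1 + ⋯ + A'_n is direct, and let C̄ be a subspace with dim C̄ ≤ 1, C̄ ⊆ A'_1 + ⋯ + A'_n, and C̄ ∩ (Σ_{i≠k} A'_i) = 0 for every k. Let D ⊆ {1,…,n} and define subspaces Ā_1,…,Ā_n by: Ā_k := A'_k for k ∉ D, and, recursively in increasing order of k ∈ D, Ā_k := A'_k ∩ ( C̄ + Σ_{i∉D} A'_i + Σ_{i∈D, i<k} Ā_i + Σ_{i∈D, i>k} A'_i ). Then: the sum Ā_1 + ⋯ + Ā_n is direct; C̄ ⊆ Ā_1 + ⋯ + Ā_n and C̄ ∩ (Σ_{i≠k} Ā_i) = 0 for every k; dim Ā_k = dim C̄ for every k ∈ D; and Ā_k ⊆ (Σ_{i≠k} Ā_i) + C̄ for every k ∈ D. -/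
open Finset

/-- Claim 3 of the paper: given subspaces `A'_1,…,A'_n` whose sum is direct and
a subspace `C̄` of dimension at most `1` contained in `A'_1 + ⋯ + A'_n` and
meeting each `Σ_{i≠k} A'_i` trivially, and given `D ⊆ {1,…,n}`, the family
`Ā_1,…,Ā_n` defined by `Ā_k = A'_k` for `k ∉ D` and, recursively in increasing
order of `k ∈ D`,
`Ā_k = A'_k ∩ (C̄ + Σ_{i∉D} A'_i + Σ_{i∈D, i<k} Ā_i + Σ_{i∈D, i>k} A'_i)`,
satisfies: the sum of the `Ā_k` is direct; `C̄ ⊆ Ā_1 + ⋯ + Ā_n` and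
`C̄ ∩ (Σ_{i≠k} Ā_i) = 0` for every `k`; `dim Ā_k = dim C̄` for `k ∈ D`; and
`Ā_k ⊆ Σ_{i≠k} Ā_i + C̄` for `k ∈ D`. -/
theorem complementary_tuple_condition_i (F V : Type*) [Field F] [AddCommGroup V]
    [Module F V] [FiniteDimensional F V] (n : ℕ)
    (A' : ℕ → Submodule F V)
    (hdir : ∀ k ∈ Icc 1 n, A' k ⊓ (∑ i ∈ (Icc 1 n).erase k, A' i) = ⊥)
    (Cb : Submodule F V) (hCdim : Module.finrank F Cb ≤ 1)
    (hCle : Cb ≤ ∑ i ∈ Icc 1 n, A' i)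
    (hCint : ∀ k ∈ Icc 1 n, Cb ⊓ (∑ i ∈ (Icc 1 n).erase k, A' i) = ⊥)
    (D : Finset ℕ) (hD : D ⊆ Icc 1 n)
    (Abar : ℕ → Submodule F V)
    (hnotD : ∀ k ∈ Icc 1 n, k ∉ D → Abar k = A' k)
    (hinD : ∀ k ∈ D, Abar k = A' k ⊓
        (Cb + (∑ i ∈ Icc 1 n \ D, A' i) + (∑ i ∈ D.filter (fun i => i < k), Abar i)
          + (∑ i ∈ D.filter (fun i => k < i), A' i))) :
    (∀ k ∈ Icc 1 n, Abar k ⊓ (∑ i ∈ (Icc 1 n).erase k, Abar i) = ⊥) ∧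
    Cb ≤ (∑ i ∈ Icc 1 n, Abar i) ∧
    (∀ k ∈ Icc 1 n, Cb ⊓ (∑ i ∈ (Icc 1 n).erase k, Abar i) = ⊥) ∧
    (∀ k ∈ D, Module.finrank F (Abar k) = Module.finrank F Cb) ∧
    (∀ k ∈ D, Abar k ≤ (∑ i ∈ (Icc 1 n).erase k, Abar i) + Cb) := by
  classical
  -- sums of submodules as suprema
  have hsum : ∀ (s : Finset ℕ) (p : ℕ → Submodule F V),
      ∑ i ∈ s, p i = ⨆ i ∈ s, p i := by
    intro s p
    induction s using Finset.induction_on with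
    | empty => simp
    | @insert a s ha ih =>
      rw [Finset.sum_insert ha, Submodule.add_eq_sup, ih, Finset.iSup_insert]
  have hmem_sum : ∀ (s : Finset ℕ) (p : ℕ → Submodule F V) (f : ℕ → V),
      (∀ i ∈ s, f i ∈ p i) → (∑ i ∈ s, f i) ∈ ∑ i ∈ s, p i := by
    intro s p f h
    rw [hsum]
    exact Submodule.sum_mem _ fun i hi => le_biSup p hi (h i hi)
  have hsum_mono : ∀ (s : Finset ℕ) (p q : ℕ → Submodule F V),
      (∀ i ∈ s, p i ≤ q i) → (∑ i ∈ s, p i) ≤ ∑ i ∈ s, q i := by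
    intro s p q h
    rw [hsum, hsum]
    exact iSup₂_mono h
  have hone_le : ∀ (s : Finset ℕ) (p : ℕ → Submodule F V) (i : ℕ), i ∈ s →
      p i ≤ ∑ j ∈ s, p j := by
    intro s p i hi
    rw [hsum]
    exact le_biSup p hi
  -- reassociation of the four-fold sum
  have hrw : ∀ a b c d : Submodule F V, a + b + c + d = a ⊔ (b + c + d) := by
    intro a b c d
    simp only [Submodule.add_eq_sup, sup_assoc]
  -- Abar ≤ A' on Icc
  have hle : ∀ k ∈ Icc 1 n, Abar k ≤ A' k := by
    intro k hk
    by_cases hkD : k ∈ D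
    · rw [hinD k hkD]; exact inf_le_left
    · rw [hnotD k hk hkD]
  -- the "rest" of the recursive sum sits inside Σ_{i≠k} A' i
  have hS : ∀ k ∈ D,
      ((∑ i ∈ Icc 1 n \ D, A' i) + (∑ i ∈ D.filter (fun i => i < k), Abar i)
        + (∑ i ∈ D.filter (fun i => k < i), A' i))
        ≤ ∑ i ∈ (Icc 1 n).erase k, A' i := by
    intro k hkD
    simp only [Submodule.add_eq_sup]
    refine sup_le (sup_le ?_ ?_) ?_
    · refine (hsum _ _ ▸ iSup₂_le fun i hi => ?_)
      obtain ⟨hiI, hiD⟩ := Finset.mem_sdiff.mp hi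
      exact hone_le _ _ i (Finset.mem_erase.mpr ⟨fun h => hiD (h ▸ hkD), hiI⟩)
    · refine (hsum _ _ ▸ iSup₂_le fun i hi => ?_)
      obtain ⟨hiD, hik⟩ := Finset.mem_filter.mp hi
      exact le_trans (hle i (hD hiD))
        (hone_le _ _ i (Finset.mem_erase.mpr ⟨Nat.ne_of_lt hik, hD hiD⟩))
    · refine (hsum _ _ ▸ iSup₂_le fun i hi => ?_)
      obtain ⟨hiD, hik⟩ := Finset.mem_filter.mp hi
      exact hone_le _ _ i (Finset.mem_erase.mpr ⟨Nat.ne_of_gt hik, hD hiD⟩)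
  by_cases hC : Cb = ⊥
  · -- degenerate case: Cb = 0, so Abar k = 0 for k ∈ D
    have hAbot : ∀ k ∈ D, Abar k = ⊥ := by
      intro k hkD
      have hkI := hD hkD
      have h2 : Abar k ≤ ∑ i ∈ (Icc 1 n).erase k, A' i := by
        rw [hinD k hkD]
        refine le_trans inf_le_right ?_
        rw [hrw]
        exact sup_le (hC ▸ bot_le) (hS k hkD)
      have := le_trans (le_inf (hle k hkI) h2) (hdir k hkI).le
      exact le_bot_iff.mp this
    have hAle : ∀ k, ∑ i ∈ (Icc 1 n).erase k, Abar i ≤ ∑ i ∈ (Icc 1 n).erase k, A' i :=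
      fun k => hsum_mono _ _ _ fun i hi => hle i (Finset.mem_of_mem_erase hi)
    refine ⟨?_, ?_, ?_, ?_, ?_⟩
    · intro k hk
      exact le_bot_iff.mp (le_trans (inf_le_inf (hle k hk) (hAle k)) (hdir k hk).le)
    · rw [hC]; exact bot_le
    · intro k hk
      rw [hC, bot_inf_eq]
    · intro k hk
      rw [hAbot k hk, hC]
    · intro k hk
      rw [hAbot k hk]; exact bot_le
  · -- main case: dim Cb = 1
    obtain ⟨c, hcC, hc0⟩ := Cb.ne_bot_iff.mp hC
    have hspan : Submodule.span F {c} = Cb := by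
      refine Submodule.eq_of_le_of_finrank_le
        (Submodule.span_le.mpr (Set.singleton_subset_iff.mpr hcC)) ?_
      rw [finrank_span_singleton hc0]
      exact hCdim
    have hCrank : Module.finrank F Cb = 1 := by
      rw [← hspan, finrank_span_singleton hc0]
    obtain ⟨μ, hμ⟩ := (Submodule.mem_iSup_finset_iff_exists_sum A' c).mp
      (hsum (Icc 1 n) A' ▸ hCle hcC)
    set a : ℕ → V := fun i => (μ i : V) with ha_def
    have ha : ∀ i, a i ∈ A' i := fun i => (μ i).2
    have hc : ∑ i ∈ Icc 1 n, a i = c := hμ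
    have ha0 : ∀ k ∈ Icc 1 n, a k ≠ 0 := by
      intro k hk hak
      have hcmem : c ∈ ∑ i ∈ (Icc 1 n).erase k, A' i := by
        rw [← hc, ← Finset.add_sum_erase _ a hk, hak, zero_add]
        exact hmem_sum _ _ _ fun i _ => ha i
      have : c ∈ Cb ⊓ (∑ i ∈ (Icc 1 n).erase k, A' i) := ⟨hcC, hcmem⟩
      rw [hCint k hk] at this
      exact hc0 ((Submodule.mem_bot F).mp this)
    have hcdiff : ∀ k ∈ Icc 1 n, c - a k = ∑ i ∈ (Icc 1 n).erase k, a i := by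
      intro k hk
      rw [← hc, ← Finset.add_sum_erase _ a hk, add_sub_cancel_left]
    -- key: for k ∈ D, Abar k = span {a k}
    have key : ∀ k, k ∈ D → Abar k = Submodule.span F {a k} := by
      intro k
      induction k using Nat.strong_induction_on with
      | _ k ih =>
      intro hkD
      have hkI := hD hkD
      apply le_antisymm
      · intro x hx
        rw [hinD k hkD] at hx
        obtain ⟨hxA, hxS⟩ := hx
        rw [hrw] at hxS
        obtain ⟨y, hy, z, hz, hyz⟩ := Submodule.mem_sup.mp hxS
        rw [← hspan] at hy
        obtain ⟨γ, hγ⟩ := Submodule.mem_span_singleton.mp hy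
        have hz' : z ∈ ∑ i ∈ (Icc 1 n).erase k, A' i := hS k hkD hz
        have hxk : x - γ • a k ∈ A' k ⊓ (∑ i ∈ (Icc 1 n).erase k, A' i) := by
          constructor
          · exact Submodule.sub_mem _ hxA (Submodule.smul_mem _ _ (ha k))
          · have hx' : x - γ • a k = γ • (c - a k) + z := by
              rw [← hyz, ← hγ, smul_sub]; abel
            rw [hx']
            refine Submodule.add_mem _ (Submodule.smul_mem _ _ ?_) hz'
            rw [hcdiff k hkI]
            exact hmem_sum _ _ _ fun i _ => ha i
        rw [hdir k hkI] at hxk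
        have hxeq : x = γ • a k := sub_eq_zero.mp ((Submodule.mem_bot F).mp hxk)
        exact Submodule.mem_span_singleton.mpr ⟨γ, hxeq.symm⟩
      · rw [Submodule.span_le, Set.singleton_subset_iff, SetLike.mem_coe, hinD k hkD]
        refine ⟨ha k, ?_⟩
        rw [hrw]
        have hT : ∀ i ∈ (Icc 1 n).erase k,
            a i ∈ Cb ⊔ ((∑ i ∈ Icc 1 n \ D, A' i)
              + (∑ i ∈ D.filter (fun i => i < k), Abar i)
              + (∑ i ∈ D.filter (fun i => k < i), A' i)) := by
          intro i hi
          obtain ⟨hik, hiI⟩ := Finset.mem_erase.mp hi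
          by_cases hiD : i ∈ D
          · rcases lt_or_gt_of_ne hik with h | h
            · have hmem : a i ∈ Abar i := by
                rw [ih i h hiD]
                exact Submodule.mem_span_singleton_self _
              have h1 : Abar i ≤ ∑ j ∈ D.filter (fun j => j < k), Abar j :=
                hone_le _ Abar i (Finset.mem_filter.mpr ⟨hiD, h⟩)
              have h2 : (∑ j ∈ D.filter (fun j => j < k), Abar j : Submodule F V) ≤
                  Cb ⊔ ((∑ i ∈ Icc 1 n \ D, A' i)
                    + (∑ i ∈ D.filter (fun i => i < k), Abar i)
                    + (∑ i ∈ D.filter (fun i => k < i), A' i)) := by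
                simp only [Submodule.add_eq_sup]
                exact le_sup_of_le_right (le_sup_of_le_left le_sup_right)
              exact h2 (h1 hmem)
            · have h1 : A' i ≤ ∑ j ∈ D.filter (fun j => k < j), A' j :=
                hone_le _ A' i (Finset.mem_filter.mpr ⟨hiD, h⟩)
              have h2 : (∑ j ∈ D.filter (fun j => k < j), A' j : Submodule F V) ≤
                  Cb ⊔ ((∑ i ∈ Icc 1 n \ D, A' i)
                    + (∑ i ∈ D.filter (fun i => i < k), Abar i)
                    + (∑ i ∈ D.filter (fun i => k < i), A' i)) := by
                simp only [Submodule.add_eq_sup]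
                exact le_sup_of_le_right le_sup_right
              exact h2 (h1 (ha i))
          · have h1 : A' i ≤ ∑ j ∈ Icc 1 n \ D, A' j :=
              hone_le _ A' i (Finset.mem_sdiff.mpr ⟨hiI, hiD⟩)
            have h2 : (∑ j ∈ Icc 1 n \ D, A' j : Submodule F V) ≤
                Cb ⊔ ((∑ i ∈ Icc 1 n \ D, A' i)
                  + (∑ i ∈ D.filter (fun i => i < k), Abar i)
                  + (∑ i ∈ D.filter (fun i => k < i), A' i)) := by
              simp only [Submodule.add_eq_sup]
              exact le_sup_of_le_right (le_sup_of_le_left le_sup_left)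
            exact h2 (h1 (ha i))
        have hak : a k = c - ∑ i ∈ (Icc 1 n).erase k, a i := by
          rw [← hcdiff k hkI]; abel
        rw [hak]
        exact Submodule.sub_mem _ (Submodule.mem_sup_left hcC) (Submodule.sum_mem _ hT)
    -- deduce the conclusions
    have hAmem : ∀ i ∈ Icc 1 n, a i ∈ Abar i := by
      intro i hi
      by_cases hiD : i ∈ D
      · rw [key i hiD]; exact Submodule.mem_span_singleton_self _
      · rw [hnotD i hi hiD]; exact ha i
    have hAle : ∀ k, ∑ i ∈ (Icc 1 n).erase k, Abar i ≤ ∑ i ∈ (Icc 1 n).erase k, A' i :=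
      fun k => hsum_mono _ _ _ fun i hi => hle i (Finset.mem_of_mem_erase hi)
    refine ⟨?_, ?_, ?_, ?_, ?_⟩
    · intro k hk
      exact le_bot_iff.mp (le_trans (inf_le_inf (hle k hk) (hAle k)) (hdir k hk).le)
    · rw [← hspan, Submodule.span_le, Set.singleton_subset_iff, SetLike.mem_coe, ← hc]
      exact hmem_sum _ _ _ hAmem
    · intro k hk
      exact le_bot_iff.mp (le_trans (inf_le_inf le_rfl (hAle k)) (hCint k hk).le)
    · intro k hk
      rw [key k hk, finrank_span_singleton (ha0 k (hD hk)), hCrank]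
    · intro k hk
      have hkI := hD hk
      rw [key k hk, Submodule.span_le, Set.singleton_subset_iff, SetLike.mem_coe,
        Submodule.add_eq_sup]
      have hak : a k = c - ∑ i ∈ (Icc 1 n).erase k, a i := by
        rw [← hcdiff k hkI]; abel
      rw [hak]
      refine Submodule.sub_mem _ (Submodule.mem_sup_right hcC) (Submodule.mem_sup_left ?_)
      exact hmem_sum _ _ _ fun i hi => hAmem i (Finset.mem_of_mem_erase hi)
end
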